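/- arXiv:1903.09619 — 3 statements merged into one kernel-verified Lean document; each statement's English description precedes it below -/
import Mathlib

section
/- Let m, n ≥ 2 be natural numbers. If both m and n are even, then H(mn) = H(m) + H(n). If at least one of m and n is odd, then H(mn) = H(m) + H(n) − 1. -/
/-- The height function: H(1) = 0 and H(n) = H(φ(n)) + 1 for n ≥ 2. -/
def H : ℕ → ℕ
  | 0 => 0
  | 1 => 0
  | n + 2 => H (Nat.totient (n + 2)) + 1
  decreasing_by exact Nat.totient_lt _ (by omega)

/-- The sum-of-heights function S(n) = ∑_{k=1}^n H(k). -/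
def S (n : ℕ) : ℕ := ∑ k ∈ Finset.Icc 1 n, H k

/-! Let `additiveHeight` be the completely additive function taking the value `H p - p % 2` at a
prime `p` (Shapiro's class function). Everything follows from `H n = additiveHeight n + n % 2`
for `n ≥ 2`, proved by strong induction through `H n = H (φ n) + 1`: for an odd prime `p` the
induction hypothesis at the even number `p - 1 < p` gives `additiveHeight (p - 1) = additiveHeight p`,
and then `φ (p ^ k) = p ^ (k - 1) * (p - 1)` shows that `additiveHeight (φ n)` is
`additiveHeight n` minus one if `n` is even and `additiveHeight n` if `n` is odd. -/

lemma H_one : H 1 = 0 := by rw [H]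

lemma H_eq_H_totient_add_one {n : ℕ} (hn : 2 ≤ n) : H n = H n.totient + 1 := by
  obtain ⟨k, rfl⟩ := Nat.exists_eq_add_of_le' hn
  rw [H]

lemma H_two : H 2 = 1 := by
  rw [H_eq_H_totient_add_one le_rfl, Nat.totient_two, H_one]

lemma mod_two_add_mod_two_of_coprime {a b : ℕ} (hab : a.Coprime b) :
    a % 2 + b % 2 = a * b % 2 + 1 := by
  have hnot : ¬ (a % 2 = 0 ∧ b % 2 = 0) := fun ⟨ha, hb⟩ =>
    Nat.not_coprime_of_dvd_of_dvd one_lt_two (Nat.dvd_of_mod_eq_zero ha)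
      (Nat.dvd_of_mod_eq_zero hb) hab
  rw [Nat.mul_mod]
  rcases Nat.mod_two_eq_zero_or_one a with ha | ha <;>
    rcases Nat.mod_two_eq_zero_or_one b with hb | hb <;> simp [ha, hb] at hnot ⊢

noncomputable def additiveHeight (n : ℕ) : ℕ :=
  Finsupp.linearCombination ℕ (fun p => H p - p % 2) n.factorization

lemma additiveHeight_one : additiveHeight 1 = 0 := by
  simp [additiveHeight]

lemma additiveHeight_mul {a b : ℕ} (ha : a ≠ 0) (hb : b ≠ 0) :
    additiveHeight (a * b) = additiveHeight a + additiveHeight b := by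
  simp only [additiveHeight, Nat.factorization_mul ha hb, map_add]

lemma additiveHeight_prime_pow {p : ℕ} (hp : p.Prime) (k : ℕ) :
    additiveHeight (p ^ k) = k * (H p - p % 2) := by
  simp [additiveHeight, hp.factorization_pow, Finsupp.linearCombination_single]

lemma additiveHeight_prime {p : ℕ} (hp : p.Prime) : additiveHeight p = H p - p % 2 := by
  simpa using additiveHeight_prime_pow hp 1

lemma additiveHeight_totient_add_one {n : ℕ} (hn : n ≠ 0)
    (hodd : ∀ p, p.Prime → p ∣ n → Odd p → additiveHeight (p - 1) = additiveHeight p) :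
    additiveHeight n.totient + 1 = additiveHeight n + n % 2 := by
  induction n using Nat.recOnPosPrimePosCoprime with
  | zero => exact absurd rfl hn
  | one => simp [additiveHeight_one]
  | prime_pow p k hp hk =>
    obtain ⟨j, rfl⟩ := Nat.exists_eq_add_of_le' hk
    rw [Nat.totient_prime_pow hp hk, additiveHeight_mul (pow_ne_zero _ hp.ne_zero)
      (by have := hp.two_le; omega), additiveHeight_prime_pow hp, additiveHeight_prime_pow hp,
      Nat.add_sub_cancel]
    rcases hp.eq_two_or_odd' with rfl | hpo
    · simp [additiveHeight_one, H_two, Nat.pow_mod]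
    · rw [hodd p hp (dvd_pow_self p (by omega)) hpo, additiveHeight_prime hp,
        Nat.odd_iff.mp hpo.pow, Nat.odd_iff.mp hpo]
      ring
  | coprime a b ha hb hab iha ihb =>
    have hdvd : ∀ p, p ∣ a ∨ p ∣ b → p ∣ a * b := by
      rintro p (h | h)
      · exact h.mul_right b
      · exact h.mul_left a
    have hφa := iha (by omega) fun p hp h => hodd p hp (hdvd p (.inl h))
    have hφb := ihb (by omega) fun p hp h => hodd p hp (hdvd p (.inr h))
    have hparity := mod_two_add_mod_two_of_coprime hab
    rw [Nat.totient_mul hab, additiveHeight_mul (Nat.totient_pos.mpr (by omega)).ne'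
      (Nat.totient_pos.mpr (by omega)).ne', additiveHeight_mul (by omega) (by omega)]
    omega

lemma H_eq_additiveHeight_add_mod_two {n : ℕ} (hn : 2 ≤ n) :
    H n = additiveHeight n + n % 2 := by
  induction n using Nat.strong_induction_on with
  | _ n ih =>
  rcases hn.eq_or_lt with rfl | hn
  · rw [additiveHeight_prime Nat.prime_two, H_two]
  have hodd (p : ℕ) (hp : p.Prime) (hpn : p ∣ n) (hpo : Odd p) :
      additiveHeight (p - 1) = additiveHeight p := by
    have hp_mod := Nat.odd_iff.mp hpo
    have hp_two := hp.two_le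
    have hp_le := Nat.le_of_dvd (by omega) hpn
    have hpred := ih (p - 1) (by omega) (by omega)
    rw [additiveHeight_prime hp, H_eq_H_totient_add_one hp_two, Nat.totient_prime hp]
    omega
  have htot_even : n.totient % 2 = 0 := Nat.even_iff.mp (Nat.totient_even hn)
  have htot_pos : 0 < n.totient := Nat.totient_pos.mpr (by omega)
  have htot := ih n.totient (Nat.totient_lt n (by omega)) (by omega)
  have := additiveHeight_totient_add_one (by omega) hodd
  rw [H_eq_H_totient_add_one hn.le]
  omega

theorem height_additivity (m n : ℕ) (hm : 2 ≤ m) (hn : 2 ≤ n) :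
    (Even m → Even n → H (m * n) = H m + H n) ∧
    ((Odd m ∨ Odd n) → H (m * n) = H m + H n - 1) := by
  have hmn : 2 ≤ m * n := by nlinarith
  rw [H_eq_additiveHeight_add_mod_two hm, H_eq_additiveHeight_add_mod_two hn,
    H_eq_additiveHeight_add_mod_two hmn, additiveHeight_mul (by omega) (by omega), Nat.mul_mod,
    Nat.even_iff, Nat.even_iff, Nat.odd_iff, Nat.odd_iff]
  rcases Nat.mod_two_eq_zero_or_one m with h | h <;>
    rcases Nat.mod_two_eq_zero_or_one n with h' | h' <;> rw [h, h'] <;> omega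
end

section
/- If m > 1 is a natural number, then H(3m) = H(m) + 1. -/
/-!
φ(3m) is 3φ(m) when 3 ∣ m and 2φ(m) otherwise, so the claim follows by induction on m once
doubling is known to raise the height of φ(m) by one. Doubling raises the height of every k that
is 1 or even: then φ(2k) = 2φ(k), and φ(k) is again 1 or even.
-/

open Nat

lemma H_of_two_le {n : ℕ} (hn : 2 ≤ n) : H n = H (φ n) + 1 := by
  obtain ⟨k, rfl⟩ : ∃ k, n = k + 2 := ⟨n - 2, by omega⟩
  rw [H]

lemma totient_eq_one_or_even (n : ℕ) : φ n = 1 ∨ Even (φ n) := by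
  rcases Nat.lt_or_ge 2 n with hn | hn
  · exact .inr (totient_even hn)
  · interval_cases n <;> simp

lemma one_lt_totient {n : ℕ} (hn : 2 < n) : 1 < φ n := by
  obtain ⟨j, hj⟩ := totient_even hn
  have : 0 < φ n := totient_pos.2 (by omega)
  omega

lemma H_two_mul {k : ℕ} (hk : 0 < k) (hk' : k = 1 ∨ Even k) : H (2 * k) = H k + 1 := by
  induction k using Nat.strong_induction_on with
  | _ k ih =>
  rcases hk' with rfl | hev
  · rw [H_of_two_le le_rfl, totient_two]
  · have hk2 : 2 ≤ k := by obtain ⟨j, rfl⟩ := hev; omega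
    rw [H_of_two_le (by omega), totient_two_mul_of_even hev,
      ih _ (totient_lt k hk2) (totient_pos.2 hk) (totient_eq_one_or_even k), H_of_two_le hk2]

theorem height_three_mul (m : ℕ) (hm : 1 < m) :
    H (3 * m) = H m + 1 := by
  induction m using Nat.strong_induction_on with
  | _ m ih =>
  rw [H_of_two_le (by omega : 2 ≤ 3 * m), H_of_two_le hm]
  by_cases h3 : 3 ∣ m
  · have hm3 : 3 ≤ m := le_of_dvd (by omega) h3
    rw [totient_mul_of_prime_of_dvd prime_three h3, ih _ (totient_lt m hm) (one_lt_totient hm3)]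
  · rw [totient_mul_of_prime_of_not_dvd prime_three h3,
      H_two_mul (totient_pos.2 (by omega)) (totient_eq_one_or_even m)]
end

section
/- There exist real constants a > 0 and A > 0 such that for every natural number n > 2, a·n²/S(n) ≤ π(n) ≤ A·n²/S(n), where π(n) denotes the number of primes less than or equal to n. -/
/-!
Let `C` (`shapiro` below, after H. N. Shapiro) be the completely additive function with `C 2 = 1`
and `C p = C (p - 1)` for odd primes `p`. Checking on prime powers, `C (φ n) = C n - 1` for even
`n` and `C (φ n) = C n` for odd `n`; as `φ n` is even for `n > 2`, this gives
`H n = C n + n % 2` for `n ≥ 2`. Since `2 ^ C n ≤ n ≤ 3 ^ C n`, `H k` is of order `log k`, so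
`S n` is of order `n log n`, and Chebyshev's bounds `π n ≍ n / log n` give
`π n * S n ≍ n ^ 2`.
-/

open Finset
open scoped Nat Nat.Prime

def shapiro (n : ℕ) : ℕ :=
  (n.primeFactorsList.attach.map fun p => if p.1 = 2 then 1 else shapiro (p.1 - 1)).sum
decreasing_by
  have := (Nat.prime_of_mem_primeFactorsList p.2).two_le
  have := Nat.le_of_mem_primeFactorsList p.2
  omega

theorem shapiro_eq (n : ℕ) :
    shapiro n = (n.primeFactorsList.map fun p => if p = 2 then 1 else shapiro (p - 1)).sum := by
  rw [shapiro]
  simp only [List.map_subtype, List.unattach_attach]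

theorem shapiro_zero : shapiro 0 = 0 := by rw [shapiro_eq, Nat.primeFactorsList_zero]; rfl

theorem shapiro_one : shapiro 1 = 0 := by rw [shapiro_eq, Nat.primeFactorsList_one]; rfl

theorem shapiro_prime {p : ℕ} (hp : p.Prime) :
    shapiro p = if p = 2 then 1 else shapiro (p - 1) := by
  rw [shapiro_eq, Nat.primeFactorsList_prime hp, List.map_singleton, List.sum_singleton]

theorem shapiro_two : shapiro 2 = 1 := by rw [shapiro_prime Nat.prime_two, if_pos rfl]

theorem shapiro_prime_of_ne_two {p : ℕ} (hp : p.Prime) (h2 : p ≠ 2) :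
    shapiro p = shapiro (p - 1) := by
  rw [shapiro_prime hp, if_neg h2]

theorem shapiro_mul {a b : ℕ} (ha : a ≠ 0) (hb : b ≠ 0) :
    shapiro (a * b) = shapiro a + shapiro b := by
  simp only [shapiro_eq a, shapiro_eq b, shapiro_eq (a * b),
    ((Nat.perm_primeFactorsList_mul ha hb).map _).sum_eq, List.map_append, List.sum_append]

theorem shapiro_pow {a : ℕ} (ha : a ≠ 0) (k : ℕ) : shapiro (a ^ k) = k * shapiro a := by
  induction k with
  | zero => rw [pow_zero, shapiro_one, zero_mul]
  | succ k ih => rw [pow_succ, shapiro_mul (pow_ne_zero k ha) ha, ih, add_one_mul]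

theorem shapiro_totient_add_one {n : ℕ} (hn : n ≠ 0) :
    shapiro (φ n) + 1 = shapiro n + n % 2 := by
  induction n using Nat.recOnPosPrimePosCoprime with
  | zero => exact absurd rfl hn
  | one => rfl
  | prime_pow p k hp hk =>
    obtain ⟨k, rfl⟩ := Nat.exists_eq_add_of_lt hk
    have hp1 : p - 1 ≠ 0 := by have := hp.two_le; omega
    rw [Nat.totient_prime_pow hp hk, shapiro_mul (pow_ne_zero _ hp.ne_zero) hp1,
      shapiro_pow hp.ne_zero, shapiro_pow hp.ne_zero]
    obtain rfl | h2 := eq_or_ne p 2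
    · rw [shapiro_two, Nat.pow_mod, Nat.mod_self, zero_pow hk.ne', shapiro_one]
      simp
    · rw [← shapiro_prime_of_ne_two hp h2, Nat.odd_iff.1 (hp.odd_of_ne_two h2).pow]
      simp [add_mul]
  | coprime a b ha hb hab iha ihb =>
    have hodd : a % 2 = 1 ∨ b % 2 = 1 := by
      by_contra! h
      have := Nat.eq_one_of_dvd_coprimes hab (show 2 ∣ a by omega) (show 2 ∣ b by omega)
      omega
    rw [Nat.totient_mul hab, shapiro_mul (Nat.totient_pos.2 (by omega)).ne'
      (Nat.totient_pos.2 (by omega)).ne', shapiro_mul (by omega) (by omega), Nat.mul_mod]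
    have := iha (by omega)
    have := ihb (by omega)
    rcases hodd with h | h <;> rw [h] <;> omega

theorem H_eq_shapiro_add_mod_two {n : ℕ} (hn : 2 ≤ n) : H n = shapiro n + n % 2 := by
  induction n using Nat.strong_induction_on with
  | _ n ih =>
  obtain ⟨m, rfl⟩ := Nat.exists_eq_add_of_le' hn
  rw [H]
  obtain rfl | hm := eq_or_ne m 0
  · rw [Nat.totient_two, shapiro_two, H]
  · have heven : φ (m + 2) % 2 = 0 := Nat.even_iff.1 (Nat.totient_even (by omega))
    have hpos : 0 < φ (m + 2) := Nat.totient_pos.2 (by omega)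
    rw [ih _ (Nat.totient_lt _ (by omega)) (by omega), heven, add_zero,
      shapiro_totient_add_one (by omega)]

theorem shapiro_le_H (n : ℕ) : shapiro n ≤ H n := by
  obtain h | h := lt_or_ge n 2
  · interval_cases n <;> simp [H, shapiro_zero, shapiro_one]
  · rw [H_eq_shapiro_add_mod_two h]; omega

theorem H_le_shapiro_add_one (n : ℕ) : H n ≤ shapiro n + 1 := by
  obtain h | h := lt_or_ge n 2
  · interval_cases n <;> simp [H]
  · rw [H_eq_shapiro_add_mod_two h]; omega

@[elab_as_elim]
theorem strong_induction_on_primes {P : ℕ → Prop} (one : P 1)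
    (prime : ∀ p, p.Prime → (∀ m, m ≠ 0 → m < p → P m) → P p)
    (mul : ∀ a b, a ≠ 0 → b ≠ 0 → P a → P b → P (a * b)) (n : ℕ) (hn : n ≠ 0) :
    P n := by
  induction n using Nat.strong_induction_on with
  | _ n ih =>
  obtain rfl | hn1 := eq_or_ne n 1
  · exact one
  by_cases hp : n.Prime
  · exact prime n hp fun m hm hmn => ih m hmn hm
  obtain ⟨a, b, ha, hb, rfl⟩ := (Nat.not_prime_iff_exists_mul_eq (by omega)).1 hp
  have ha0 : a ≠ 0 := left_ne_zero_of_mul hn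
  have hb0 : b ≠ 0 := right_ne_zero_of_mul hn
  exact mul a b ha0 hb0 (ih a ha ha0) (ih b hb hb0)

theorem two_pow_shapiro_le {n : ℕ} (hn : n ≠ 0) : 2 ^ shapiro n ≤ n := by
  refine strong_induction_on_primes ?_ (fun p hp ih => ?_) (fun a b ha hb iha ihb => ?_) n hn
  · simp [shapiro_one]
  · obtain rfl | h2 := eq_or_ne p 2
    · rw [shapiro_two, pow_one]
    · have := hp.two_le
      rw [shapiro_prime_of_ne_two hp h2]
      exact (ih (p - 1) (by omega) (by omega)).trans (Nat.sub_le p 1)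
  · rw [shapiro_mul ha hb, pow_add]
    exact Nat.mul_le_mul iha ihb

theorem le_three_pow_shapiro (n : ℕ) : n ≤ 3 ^ shapiro n := by
  obtain rfl | hn := eq_or_ne n 0
  · exact Nat.zero_le _
  refine strong_induction_on_primes ?_ (fun p hp ih => ?_) (fun a b ha hb iha ihb => ?_) n hn
  · simp [shapiro_one]
  · obtain rfl | h2 := eq_or_ne p 2
    · rw [shapiro_two]; norm_num
    · have hodd := Nat.odd_iff.1 (hp.odd_of_ne_two h2)
      have := hp.two_le
      have hsplit : p - 1 = 2 * ((p - 1) / 2) := by omega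
      have := ih ((p - 1) / 2) (by omega) (by omega)
      rw [shapiro_prime_of_ne_two hp h2, hsplit, shapiro_mul two_ne_zero (by omega), shapiro_two,
        pow_add]
      omega
  · rw [shapiro_mul ha hb, pow_add]
    exact Nat.mul_le_mul iha ihb

theorem S_le_mul_log_add_one (n : ℕ) : S n ≤ n * (Nat.log 2 n + 1) := by
  calc S n ≤ ∑ _k ∈ Icc 1 n, (Nat.log 2 n + 1) := sum_le_sum fun k hk => ?_
    _ = n * (Nat.log 2 n + 1) := by
        rw [sum_const, Nat.card_Icc, smul_eq_mul, Nat.add_sub_cancel]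
  obtain ⟨hk1, hkn⟩ := mem_Icc.1 hk
  have := Nat.le_log_of_pow_le one_lt_two ((two_pow_shapiro_le (by omega)).trans hkn)
  have := H_le_shapiro_add_one k
  omega

theorem S_pos {n : ℕ} (hn : 2 ≤ n) : 0 < S n :=
  calc 0 < shapiro 2 := by rw [shapiro_two]; exact one_pos
    _ ≤ H 2 := shapiro_le_H 2
    _ ≤ S n := single_le_sum (fun _ _ => Nat.zero_le _) (mem_Icc.2 ⟨one_le_two, hn⟩)

theorem log_le_two_mul_H {n k : ℕ} (h : n < 2 * k) : Nat.log 2 n ≤ 2 * H k := by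
  obtain rfl | hn := eq_or_ne n 0
  · simp
  suffices 2 ^ Nat.log 2 n < 2 ^ (2 * H k + 1) from
    Nat.lt_succ_iff.1 ((Nat.pow_lt_pow_iff_right one_lt_two).1 this)
  calc 2 ^ Nat.log 2 n ≤ n := Nat.pow_log_le_self 2 hn
    _ < 2 * k := h
    _ ≤ 2 * 3 ^ shapiro k := Nat.mul_le_mul_left 2 (le_three_pow_shapiro k)
    _ ≤ 2 * 3 ^ H k := Nat.mul_le_mul_left 2 (Nat.pow_le_pow_right three_pos (shapiro_le_H k))
    _ ≤ 2 * 4 ^ H k := Nat.mul_le_mul_left 2 (Nat.pow_le_pow_left (by norm_num) _)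
    _ = 2 ^ (2 * H k + 1) := by rw [pow_succ, pow_mul]; ring

theorem mul_log_le_four_mul_S (n : ℕ) : n * Nat.log 2 n ≤ 4 * S n := by
  have hsum : (n - n / 2) * Nat.log 2 n ≤ 2 * ∑ k ∈ Icc (n / 2 + 1) n, H k := by
    calc (n - n / 2) * Nat.log 2 n = ∑ _k ∈ Icc (n / 2 + 1) n, Nat.log 2 n := by
          rw [sum_const, Nat.card_Icc, smul_eq_mul]; congr 1; omega
      _ ≤ ∑ k ∈ Icc (n / 2 + 1) n, 2 * H k :=
          sum_le_sum fun k hk => log_le_two_mul_H (by have := (mem_Icc.1 hk).1; omega)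
      _ = 2 * ∑ k ∈ Icc (n / 2 + 1) n, H k := (mul_sum ..).symm
  have hsub : ∑ k ∈ Icc (n / 2 + 1) n, H k ≤ S n :=
    sum_le_sum_of_subset (Icc_subset_Icc_left (by omega))
  calc n * Nat.log 2 n ≤ 2 * ((n - n / 2) * Nat.log 2 n) := by
        rw [← mul_assoc]; exact Nat.mul_le_mul_right _ (by omega)
    _ ≤ 4 * S n := by omega

theorem Nat.lcmUpto_le_pow_primeCounting (n : ℕ) : n.lcmUpto ≤ n ^ π n := by
  rw [Nat.lcmUpto_eq_prod_pow_log, ← Nat.primesLE_card_eq_primeCounting]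
  refine prod_le_pow_card _ _ _ fun p hp => Nat.pow_log_le_self p ?_
  have := Nat.two_le_of_mem_primesLE hp
  have := Nat.le_of_mem_primesLE hp
  omega

theorem le_log_add_one_mul_primeCounting_add_one (n : ℕ) :
    n ≤ (Nat.log 2 n + 1) * (π n + 1) := by
  have hn : n + 1 ≤ 2 ^ (Nat.log 2 n + 1) := Nat.lt_pow_succ_log_self one_lt_two n
  refine (Nat.pow_le_pow_iff_right one_lt_two).1 ?_
  calc 2 ^ n ≤ (n + 1) * n.lcmUpto := Chebyshev.two_pow_le_mul_lcmUpto n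
    _ ≤ 2 ^ (Nat.log 2 n + 1) * (2 ^ (Nat.log 2 n + 1)) ^ π n :=
        Nat.mul_le_mul hn ((Nat.lcmUpto_le_pow_primeCounting n).trans
          (Nat.pow_le_pow_left (by omega) _))
    _ = 2 ^ ((Nat.log 2 n + 1) * (π n + 1)) := by
        rw [← pow_mul, ← pow_add, mul_add_one, add_comm]

theorem pow_card_filter_primesLE_le_four_pow (m n : ℕ) :
    m ^ #{p ∈ Nat.primesLE n | m ≤ p} ≤ 4 ^ n :=
  calc m ^ #{p ∈ Nat.primesLE n | m ≤ p} ≤ ∏ p ∈ Nat.primesLE n with m ≤ p, p :=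
        pow_card_le_prod _ _ _ fun _ hp => (mem_filter.1 hp).2
    _ ≤ ∏ p ∈ Nat.primesLE n, p :=
        prod_le_prod_of_subset_of_one_le' (filter_subset _ _) fun _ hp _ =>
          (Nat.one_lt_of_mem_primesLE hp).le
    _ ≤ 4 ^ n := primorial_le_four_pow n

theorem primeCounting_le_add_card_filter_primesLE (m n : ℕ) :
    π n ≤ m + #{p ∈ Nat.primesLE n | m ≤ p} := by
  rw [← Nat.primesLE_card_eq_primeCounting,
    ← card_filter_add_card_filter_not (s := Nat.primesLE n) (m ≤ ·), add_comm]
  refine Nat.add_le_add_right ((card_le_card fun p hp => ?_).trans (card_range m).le) _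
  exact mem_range.2 (not_le.1 (mem_filter.1 hp).2)

-- Split the primes at `2 ^ j ≈ √n`: there are at most `2 ^ j` below, and `j` times the number
-- above is at most `log₂ (4 ^ n)`.
theorem primeCounting_mul_log_add_one_le (n : ℕ) : π n * (Nat.log 2 n + 1) ≤ 10 * n := by
  obtain hn | hn := le_or_gt n 1
  · rw [Nat.primeCounting_eq_zero_iff.2 hn, zero_mul]; exact Nat.zero_le _
  set L := Nat.log 2 n
  set j := (L + 1) / 2
  set K := #{p ∈ Nat.primesLE n | 2 ^ j ≤ p}
  have hL : 1 ≤ L := Nat.le_log_of_pow_le one_lt_two (by omega)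
  have hjK : j * K ≤ 2 * n := by
    refine (Nat.pow_le_pow_iff_right one_lt_two).1 ?_
    rw [pow_mul, pow_mul, show 2 ^ 2 = 4 by rfl]
    exact pow_card_filter_primesLE_le_four_pow _ n
  have h4j : 2 ^ j * 2 ^ j ≤ 2 * n :=
    calc 2 ^ j * 2 ^ j = 2 ^ (j + j) := (pow_add ..).symm
      _ ≤ 2 ^ (L + 1) := Nat.pow_le_pow_right two_pos (by omega)
      _ = 2 * 2 ^ L := pow_succ' ..
      _ ≤ 2 * n := Nat.mul_le_mul_left 2 (Nat.pow_log_le_self 2 (by omega))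
  have hLj : L + 1 ≤ 2 * 2 ^ j := by have := j.lt_two_pow_self; omega
  calc π n * (L + 1) ≤ (2 ^ j + K) * (L + 1) :=
        Nat.mul_le_mul_right _ (primeCounting_le_add_card_filter_primesLE _ n)
    _ = 2 ^ j * (L + 1) + K * (L + 1) := add_mul ..
    _ ≤ 2 ^ j * (2 * 2 ^ j) + K * (3 * j) :=
        Nat.add_le_add (Nat.mul_le_mul_left _ hLj) (Nat.mul_le_mul_left _ (by omega))
    _ = 2 * (2 ^ j * 2 ^ j) + 3 * (j * K) := by ring
    _ ≤ 10 * n := by omega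

theorem primeCounting_mul_S_le (n : ℕ) : π n * S n ≤ 10 * n ^ 2 :=
  calc π n * S n ≤ π n * (n * (Nat.log 2 n + 1)) :=
        Nat.mul_le_mul_left _ (S_le_mul_log_add_one n)
    _ = π n * (Nat.log 2 n + 1) * n := by ring
    _ ≤ 10 * n * n := Nat.mul_le_mul_right _ (primeCounting_mul_log_add_one_le n)
    _ = 10 * n ^ 2 := by ring

theorem sq_le_sixteen_mul_primeCounting_mul_S {n : ℕ} (hn : 2 ≤ n) :
    n ^ 2 ≤ 16 * (π n * S n) := by
  have hL : 1 ≤ Nat.log 2 n := Nat.le_log_of_pow_le one_lt_two hn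
  have hπ : 1 ≤ π n := Nat.one_le_iff_ne_zero.2 (Nat.primeCounting_eq_zero_iff.not.2 (by omega))
  calc n ^ 2 ≤ n * ((Nat.log 2 n + 1) * (π n + 1)) := by
        rw [sq]; exact Nat.mul_le_mul_left n (le_log_add_one_mul_primeCounting_add_one n)
    _ ≤ n * ((2 * Nat.log 2 n) * (2 * π n)) := by gcongr <;> omega
    _ = 4 * π n * (n * Nat.log 2 n) := by ring
    _ ≤ 4 * π n * (4 * S n) := Nat.mul_le_mul_left _ (mul_log_le_four_mul_S n)
    _ = 16 * (π n * S n) := by ring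

theorem chebyshev_type_pi :
    ∃ a A : ℝ, 0 < a ∧ 0 < A ∧ ∀ n : ℕ, 2 < n →
      a * (n : ℝ) ^ 2 / (S n : ℝ) ≤ (Nat.primeCounting n : ℝ) ∧
      (Nat.primeCounting n : ℝ) ≤ A * (n : ℝ) ^ 2 / (S n : ℝ) := by
  refine ⟨1 / 16, 10, by norm_num, by norm_num, fun n hn => ?_⟩
  have hS : (0 : ℝ) < S n := Nat.cast_pos.2 (S_pos hn.le)
  have hlower : (n : ℝ) ^ 2 ≤ 16 * (π n * S n) := by
    exact_mod_cast sq_le_sixteen_mul_primeCounting_mul_S hn.le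
  have hupper : (π n * S n : ℝ) ≤ 10 * n ^ 2 := by exact_mod_cast primeCounting_mul_S_le n
  exact ⟨by rw [div_le_iff₀ hS]; linarith, by rw [le_div_iff₀ hS]; linarith⟩
end
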